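/- arXiv:1710.04807 — 5 statements merged into one kernel-verified Lean document; each statement's English description precedes it below -/
import Mathlib

section
/- For every even integer m ≥ 2, the edge-coloured graph G_m has no full rainbow matching: there is no matching containing exactly one edge of each of the m+1 colours. -/
/-!
The blue edge of a rainbow matching is the central edge of some double star `S_k`, so it covers
both centres of `S_k`. Every edge of colour `k` lies in `S_k` and meets one of its centres, so it
cannot be disjoint from the blue edge.
-/

abbrev DSV (m : ℕ) := Fin m × (Fin 2 ⊕ Fin 2 × Fin (m / 2))

def Gm (m : ℕ) : SimpleGraph (DSV m) :=
  SimpleGraph.fromRel (fun a b =>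
    a.1 = b.1 ∧ ((a.2.isLeft ∧ b.2.isLeft) ∨
      ∃ j l, a.2 = Sum.inl j ∧ b.2 = Sum.inr (j, l)))

def colm (m : ℕ) : Sym2 (DSV m) → Option (Fin m) :=
  Sym2.lift ⟨fun a b => if a.2.isLeft ∧ b.2.isLeft then none else some (min a.1 b.1),
    fun a b => by
      by_cases h : (a.2.isLeft : Prop) ∧ (b.2.isLeft : Prop) <;>
        simp [h, and_comm, min_comm]⟩

def IsMatching {V : Type*} (G : SimpleGraph V) (M : Set (Sym2 V)) : Prop :=
  M ⊆ G.edgeSet ∧ ∀ e ∈ M, ∀ f ∈ M, e ≠ f → ∀ v, v ∈ e → v ∉ f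

def HasFullRainbowMatching {V C : Type*} (G : SimpleGraph V) (c : Sym2 V → C) : Prop :=
  ∃ M : Set (Sym2 V), IsMatching G M ∧ ∀ k : C, ∃! e, e ∈ M ∧ c e = k

theorem IsMatching.eq_of_mem_of_mem {V : Type*} {G : SimpleGraph V} {M : Set (Sym2 V)}
    (hM : IsMatching G M) {e f : Sym2 V} (he : e ∈ M) (hf : f ∈ M) {v : V}
    (hve : v ∈ e) (hvf : v ∈ f) : e = f := by
  by_contra hef
  exact hM.2 e he f hf hef v hve hvf

namespace Gm

variable {m : ℕ}

theorem fst_eq_of_adj {a b : DSV m} (h : (Gm m).Adj a b) : a.1 = b.1 := by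
  rw [Gm, SimpleGraph.fromRel_adj] at h
  rcases h.2 with ⟨h, -⟩ | ⟨h, -⟩
  exacts [h, h.symm]

theorem colm_mk_of_not_isLeft {a b : DSV m} (h : ¬(a.2.isLeft ∧ b.2.isLeft)) :
    colm m s(a, b) = some (min a.1 b.1) := by
  simp [colm, h]

theorem isLeft_of_colm_eq_none {a b : DSV m} (h : colm m s(a, b) = none) :
    a.2.isLeft ∧ b.2.isLeft := by
  by_contra hab
  simp [colm_mk_of_not_isLeft hab] at h

theorem centre_mem_of_colm_eq_none {e : Sym2 (DSV m)} (he : e ∈ (Gm m).edgeSet)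
    (hc : colm m e = none) : ∃ k, ∀ j : Fin 2, ((k, Sum.inl j) : DSV m) ∈ e := by
  induction e using Sym2.ind with
  | _ a b =>
  have hab : (Gm m).Adj a b := he
  obtain ⟨x, hx⟩ := Sum.isLeft_iff.mp (isLeft_of_colm_eq_none hc).1
  obtain ⟨y, hy⟩ := Sum.isLeft_iff.mp (isLeft_of_colm_eq_none hc).2
  have hxy : x ≠ y := by
    rintro rfl
    exact hab.ne (Prod.ext (fst_eq_of_adj hab) (hx.trans hy.symm))
  refine ⟨a.1, fun j => ?_⟩
  rcases (Fin.exists_fin_two.mp ⟨j, rfl⟩ : j = 0 ∨ j = 1) with rfl | rfl <;>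
    rcases (Fin.exists_fin_two.mp ⟨x, rfl⟩ : x = 0 ∨ x = 1) with rfl | rfl <;>
    rcases (Fin.exists_fin_two.mp ⟨y, rfl⟩ : y = 0 ∨ y = 1) with rfl | rfl <;>
    simp_all [Prod.ext_iff, fst_eq_of_adj hab]

theorem centre_mem_of_colm_eq_some {e : Sym2 (DSV m)} (he : e ∈ (Gm m).edgeSet) {k : Fin m}
    (hc : colm m e = some k) : ∃ j : Fin 2, ((k, Sum.inl j) : DSV m) ∈ e := by
  induction e using Sym2.ind with
  | _ a b =>
  have hab : (Gm m).Adj a b := he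
  have hfst := fst_eq_of_adj hab
  have hnl : ¬(a.2.isLeft ∧ b.2.isLeft) := fun h => by simp [colm, h] at hc
  have hk : a.1 = k := by
    rw [colm_mk_of_not_isLeft hnl, ← hfst, min_self] at hc
    exact Option.some_injective _ hc
  rw [Gm, SimpleGraph.fromRel_adj] at hab
  rcases hab.2 with ⟨-, hl | ⟨j, l, ha, -⟩⟩ | ⟨-, hl | ⟨j, l, hb, -⟩⟩
  · exact absurd hl hnl
  · exact ⟨j, Sym2.mem_iff.mpr (Or.inl (Prod.ext hk.symm ha.symm))⟩
  · exact absurd hl.symm hnl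
  · exact ⟨j, Sym2.mem_iff.mpr (Or.inr (Prod.ext (hfst ▸ hk).symm hb.symm))⟩

end Gm

theorem stmt3_general (m : ℕ) :
    ¬ HasFullRainbowMatching (Gm m) (colm m) := by
  rintro ⟨M, hM, hrainbow⟩
  obtain ⟨e, ⟨he, hblue⟩, -⟩ := hrainbow none
  obtain ⟨k, hcentres⟩ := Gm.centre_mem_of_colm_eq_none (hM.1 he) hblue
  obtain ⟨f, ⟨hf, hk⟩, -⟩ := hrainbow (some k)
  obtain ⟨j, hj⟩ := Gm.centre_mem_of_colm_eq_some (hM.1 hf) hk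
  have hef : e = f := hM.eq_of_mem_of_mem he hf (hcentres j) hj
  rw [hef, hk] at hblue
  exact Option.some_ne_none k hblue

theorem stmt3 (m : ℕ) (hm : Even m) (h2 : 2 ≤ m) :
    ¬ HasFullRainbowMatching (Gm m) (colm m) :=
  stmt3_general m
end

section
/- For every even integer m ≥ 4, there exists a bipartite graph G with a (not necessarily proper) edge colouring such that every colour class has at least Δ(G)+1 edges, yet G has no full rainbow matching. (This refutes the conjecture of Aharoni and Berger that every colour appearing on at least Δ(G)+1 edges forces a full rainbow matching in a bipartite graph.) -/
noncomputable instance {n : ℕ} (G : SimpleGraph (Fin n)) : DecidableRel G.Adj :=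
  Classical.decRel _

/-! The witness is `Gm m`: `m` disjoint double stars whose central edges get colour `none` and
whose leaf edges in the `i`-th star get colour `some i`. Every vertex has degree at most
`m / 2 + 1`, while each colour class has `m` or `2 * (m / 2)` edges. A full rainbow matching
would contain the central edge of some star `i` together with a leaf edge of colour `i`, and the
latter meets the former at a centre. Relabelling vertices and colours by `Fin n` and `Fin k`
transports all three properties. -/

section RainbowMatching

variable {V W C C' : Type*} {G : SimpleGraph V} {G' : SimpleGraph W} {c : Sym2 V → C}
  {c' : Sym2 W → C'}

theorem not_hasFullRainbowMatching_of_forall_exists_meet (b : C)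
    (h : ∀ e ∈ G.edgeSet, c e = b → ∃ k ≠ b, ∀ f ∈ G.edgeSet, c f = k → ∃ v ∈ e, v ∈ f) :
    ¬ HasFullRainbowMatching G c := by
  rintro ⟨M, ⟨hMG, hMdisj⟩, hM⟩
  obtain ⟨e, ⟨heM, heb⟩, -⟩ := hM b
  obtain ⟨k, hkb, hk⟩ := h e (hMG heM) heb
  obtain ⟨f, ⟨hfM, hfk⟩, -⟩ := hM k
  obtain ⟨v, hve, hvf⟩ := hk f (hMG hfM) hfk
  refine hMdisj e heM f hfM ?_ v hve hvf
  rintro rfl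
  exact hkb (hfk.symm.trans heb)

theorem SimpleGraph.Iso.sym2_map_symm_map (φ : G ≃g G') (e : Sym2 W) :
    (e.map φ.symm).map φ = e := by
  simp [Sym2.map_map]

theorem HasFullRainbowMatching.of_iso (φ : G ≃g G') (d : C ≃ C')
    (hc : ∀ e, c' (e.map φ) = d (c e)) (h : HasFullRainbowMatching G' c') :
    HasFullRainbowMatching G c := by
  obtain ⟨M', ⟨hM'G, hM'disj⟩, hM'⟩ := h
  refine ⟨Sym2.map φ ⁻¹' M', ⟨fun e he => φ.map_mem_edgeSet_iff.1 (hM'G he), ?_⟩, fun k => ?_⟩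
  · intro e he f hf hef v hve hvf
    exact hM'disj _ he _ hf ((Sym2.map.injective φ.injective).ne hef) (φ v)
      (Sym2.mem_map.2 ⟨v, hve, rfl⟩) (Sym2.mem_map.2 ⟨v, hvf, rfl⟩)
  · obtain ⟨e', ⟨he'M, he'k⟩, huniq⟩ := hM' (d k)
    have hmap := φ.sym2_map_symm_map e'
    refine ⟨e'.map φ.symm, ⟨by rwa [Set.mem_preimage, hmap], d.injective ?_⟩, ?_⟩
    · rw [← hc, hmap, he'k]
    · rintro e ⟨he, hek⟩
      refine Sym2.map.injective φ.injective ?_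
      rw [hmap]
      exact huniq _ ⟨he, by rw [hc, hek]⟩

theorem ncard_colorClass_of_iso (φ : G ≃g G') (d : C ≃ C')
    (hc : ∀ e, c' (e.map φ) = d (c e)) (k : C) :
    {e ∈ G'.edgeSet | c' e = d k}.ncard = {e ∈ G.edgeSet | c e = k}.ncard := by
  rw [← Set.ncard_preimage_of_injective_subset_range (Sym2.map.injective φ.injective)
    fun e' _ => ⟨e'.map φ.symm, φ.sym2_map_symm_map e'⟩]
  congr 1
  ext e
  simp [hc, φ.map_mem_edgeSet_iff]

end RainbowMatching

namespace Gm

variable {m : ℕ}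

def centralEdge (i : Fin m) : Sym2 (DSV m) := s((i, .inl 0), (i, .inl 1))

def leafEdge (i : Fin m) (j : Fin 2) (l : Fin (m / 2)) : Sym2 (DSV m) :=
  s((i, .inl j), (i, .inr (j, l)))

theorem mem_edgeSet_iff {e : Sym2 (DSV m)} :
    e ∈ (Gm m).edgeSet ↔ (∃ i, e = centralEdge i) ∨ ∃ i j l, e = leafEdge i j l := by
  induction e using Sym2.ind with | _ a b => ?_
  rcases a with ⟨i, j | ⟨j, l⟩⟩ <;> rcases b with ⟨i', j' | ⟨j', l'⟩⟩ <;>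
    fin_cases j <;> fin_cases j' <;>
    simp [Gm, centralEdge, leafEdge, SimpleGraph.fromRel_adj] <;> grind

@[simp] theorem colm_centralEdge (i : Fin m) : colm m (centralEdge i) = none := by
  simp [colm, centralEdge]

@[simp] theorem colm_leafEdge (i : Fin m) (j : Fin 2) (l : Fin (m / 2)) :
    colm m (leafEdge i j l) = some i := by
  simp [colm, leafEdge]

theorem centralEdge_injective : Function.Injective (centralEdge (m := m)) := by
  intro i i' h
  simpa [centralEdge] using h

theorem leafEdge_injective (i : Fin m) :
    Function.Injective fun jl : Fin 2 × Fin (m / 2) => leafEdge i jl.1 jl.2 := by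
  rintro ⟨j, l⟩ ⟨j', l'⟩ h
  simpa [leafEdge] using h

theorem exists_bipartition : ∃ A : Set (DSV m), ∀ a b, (Gm m).Adj a b → (a ∈ A ↔ b ∉ A) := by
  refine ⟨{v | v.2 = .inl 0 ∨ ∃ l, v.2 = .inr (1, l)}, fun a b hab => ?_⟩
  rcases mem_edgeSet_iff.1 (show s(a, b) ∈ (Gm m).edgeSet from hab) with
    ⟨i, he⟩ | ⟨i, j, l, he⟩ <;>
    rcases Sym2.eq_iff.1 he with ⟨rfl, rfl⟩ | ⟨rfl, rfl⟩ <;> (try fin_cases j) <;> simp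

theorem eq_of_adj_inl {i : Fin m} {j : Fin 2} {w : DSV m} (h : (Gm m).Adj (i, .inl j) w) :
    w = (i, .inl j.rev) ∨ ∃ l, w = (i, .inr (j, l)) := by
  rcases mem_edgeSet_iff.1 (show s(_, w) ∈ (Gm m).edgeSet from h) with
    ⟨i', he⟩ | ⟨i', j', l, he⟩ <;>
    rcases Sym2.eq_iff.1 he with ⟨hv, rfl⟩ | ⟨hv, rfl⟩ <;> simp_all

theorem eq_of_adj_inr {i : Fin m} {j : Fin 2} {l : Fin (m / 2)} {w : DSV m}
    (h : (Gm m).Adj (i, .inr (j, l)) w) : w = (i, .inl j) := by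
  rcases mem_edgeSet_iff.1 (show s(_, w) ∈ (Gm m).edgeSet from h) with
    ⟨i', he⟩ | ⟨i', j', l', he⟩ <;>
    rcases Sym2.eq_iff.1 he with ⟨hv, rfl⟩ | ⟨hv, rfl⟩ <;> simp_all

open Finset in
theorem degree_le [DecidableRel (Gm m).Adj] (v : DSV m) : (Gm m).degree v ≤ m / 2 + 1 := by
  rw [← SimpleGraph.card_neighborFinset_eq_degree]
  rcases v with ⟨i, j | ⟨j, l⟩⟩
  · calc _ ≤ #(insert (i, .inl j.rev) (univ.image fun l => ((i, .inr (j, l)) : DSV m))) := by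
          refine card_le_card fun w hw => ?_
          rcases eq_of_adj_inl ((SimpleGraph.mem_neighborFinset _ _ _).1 hw) with rfl | ⟨l, rfl⟩ <;>
            simp
      _ ≤ #(univ.image fun l => ((i, .inr (j, l)) : DSV m)) + 1 := card_insert_le _ _
      _ ≤ m / 2 + 1 := by grw [card_image_le]; simp
  · calc _ ≤ #{((i, .inl j) : DSV m)} := by
          refine card_le_card fun w hw => ?_
          simp [eq_of_adj_inr ((SimpleGraph.mem_neighborFinset _ _ _).1 hw)]
      _ ≤ m / 2 + 1 := by simp

theorem le_ncard_colorClass_none :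
    m ≤ {e ∈ (Gm m).edgeSet | colm m e = none}.ncard := by
  calc m = (Set.range (centralEdge (m := m))).ncard := by
        rw [Set.ncard_range_of_injective centralEdge_injective, Nat.card_eq_fintype_card,
          Fintype.card_fin]
    _ ≤ _ := Set.ncard_le_ncard (by
        rintro _ ⟨i, rfl⟩
        exact ⟨mem_edgeSet_iff.2 (.inl ⟨i, rfl⟩), colm_centralEdge i⟩) (Set.toFinite _)

theorem le_ncard_colorClass_some (i : Fin m) :
    2 * (m / 2) ≤ {e ∈ (Gm m).edgeSet | colm m e = some i}.ncard := by
  calc 2 * (m / 2) = (Set.range fun jl : Fin 2 × Fin (m / 2) => leafEdge i jl.1 jl.2).ncard := by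
        rw [Set.ncard_range_of_injective (leafEdge_injective i), Nat.card_eq_fintype_card]
        simp
    _ ≤ _ := Set.ncard_le_ncard (by
        rintro _ ⟨⟨j, l⟩, rfl⟩
        exact ⟨mem_edgeSet_iff.2 (.inr ⟨i, j, l, rfl⟩), colm_leafEdge i j l⟩) (Set.toFinite _)

theorem maxDegree_add_one_le_ncard_colorClass [DecidableRel (Gm m).Adj] (hm : 4 ≤ m)
    (k : Option (Fin m)) : (Gm m).maxDegree + 1 ≤ {e ∈ (Gm m).edgeSet | colm m e = k}.ncard := by
  have hΔ : (Gm m).maxDegree ≤ m / 2 + 1 :=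
    SimpleGraph.maxDegree_le_of_forall_degree_le _ _ degree_le
  cases k with
  | none => have := le_ncard_colorClass_none (m := m); omega
  | some i => have := le_ncard_colorClass_some i; omega

theorem not_hasFullRainbowMatching : ¬ HasFullRainbowMatching (Gm m) (colm m) := by
  refine not_hasFullRainbowMatching_of_forall_exists_meet none fun e he hblue => ?_
  rcases mem_edgeSet_iff.1 he with ⟨i, rfl⟩ | ⟨i, j, l, rfl⟩
  · refine ⟨some i, Option.some_ne_none i, fun f hf hfi => ?_⟩
    rcases mem_edgeSet_iff.1 hf with ⟨i', rfl⟩ | ⟨i', j, l, rfl⟩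
    · simp at hfi
    · obtain rfl : i' = i := by simpa using hfi
      exact ⟨(i', .inl j), by fin_cases j <;> simp [centralEdge], by simp [leafEdge]⟩
  · simp at hblue

end Gm

theorem stmt4_general (m : ℕ) (h4 : 4 ≤ m) :
    ∃ (n k : ℕ) (G : SimpleGraph (Fin n)) (c : Sym2 (Fin n) → Fin k),
      (∃ A : Set (Fin n), ∀ a b, G.Adj a b → (a ∈ A ↔ b ∉ A)) ∧
      (∀ i : Fin k, G.maxDegree + 1 ≤ {e ∈ G.edgeSet | c e = i}.ncard) ∧
      ¬ HasFullRainbowMatching G c := by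
  classical
  let ψ := Fintype.equivFin (DSV m)
  let d := Fintype.equivFin (Option (Fin m))
  let φ := SimpleGraph.Iso.map ψ (Gm m)
  have hc : ∀ e, (d ∘ colm m ∘ Sym2.map ψ.symm) (e.map φ) = d (colm m e) := fun e => by
    simp [φ, Sym2.map_map, Function.comp_def]
  refine ⟨_, _, (Gm m).map ψ, d ∘ colm m ∘ Sym2.map ψ.symm, ?_, fun i => ?_,
    fun h => Gm.not_hasFullRainbowMatching (h.of_iso φ d hc)⟩
  · obtain ⟨A, hA⟩ := Gm.exists_bipartition (m := m)
    exact ⟨ψ.symm ⁻¹' A, fun a b hab => hA _ _ (φ.symm.map_adj_iff.2 hab)⟩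
  · rw [← d.apply_symm_apply i, ncard_colorClass_of_iso φ d hc]
    convert Gm.maxDegree_add_one_le_ncard_colorClass h4 (d.symm i) using 2
    -- the two sides carry different `DecidableRel` instances for the mapped graph
    convert φ.maxDegree_eq.symm

theorem stmt4 (m : ℕ) (hm : Even m) (h4 : 4 ≤ m) :
    ∃ (n k : ℕ) (G : SimpleGraph (Fin n)) (c : Sym2 (Fin n) → Fin k),
      (∃ A : Set (Fin n), ∀ a b, G.Adj a b → (a ∈ A ↔ b ∉ A)) ∧
      (∀ i : Fin k, G.maxDegree + 1 ≤ {e ∈ G.edgeSet | c e = i}.ncard) ∧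
      ¬ HasFullRainbowMatching G c :=
  stmt4_general m h4
end

section
/- For every even m ≥ 4, there exists a tripartite 3-uniform hypergraph H with vertex parts V1, V2, V3 such that every vertex of V1 has degree m, every vertex of V2 ∪ V3 has degree at most m/2 + 1 (so δ(V1) > Δ(V2 ∪ V3)), and yet H has no matching covering all of V1. (This refutes Conjecture 2.5 of Aharoni and Berger.) -/
/-!
Take `m = 2k` disjoint double stars, whose centre edges are all coloured blue and whose `2k` leaf
edges in star `i` get colour `i`; the hypergraph has the colours as `V1` and the two sides of the
bipartite graph as `V2`, `V3`. Every colour class has `m` edges, while a centre meets only `k + 1`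
edges and a leaf one. A matching covering `V1` would be a rainbow matching of the graph, but once
the blue centre edge of star `i` is chosen, every edge of colour `i` meets it.
-/

open Finset Function

namespace TripartiteHypergraph

variable {α β γ : Type*}

def HasFirstPartMatching (H : Finset (Finset (α ⊕ β ⊕ γ))) : Prop :=
  ∃ N ⊆ H, (∀ s ∈ N, ∀ t ∈ N, s ≠ t → Disjoint s t) ∧ ∀ a : α, ∃ s ∈ N, Sum.inl a ∈ s

section
variable [DecidableEq α] [DecidableEq β] [DecidableEq γ]

def triple (a : α) (b : β) (c : γ) : Finset (α ⊕ β ⊕ γ) :=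
  {Sum.inl a, Sum.inr (Sum.inl b), Sum.inr (Sum.inr c)}

def IsTripartite (H : Finset (Finset (α ⊕ β ⊕ γ))) : Prop :=
  ∀ s ∈ H, ∃ a b c, s = triple a b c

def degree (H : Finset (Finset (α ⊕ β ⊕ γ))) (v : α ⊕ β ⊕ γ) : ℕ :=
  #{s ∈ H | v ∈ s}

end

section Relabel

variable {α' β' γ' : Type*} (eα : α ≃ α') (eβ : β ≃ β') (eγ : γ ≃ γ')

def relabel (H : Finset (Finset (α ⊕ β ⊕ γ))) : Finset (Finset (α' ⊕ β' ⊕ γ')) :=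
  H.map (eα.sumCongr (eβ.sumCongr eγ)).finsetCongr.toEmbedding

variable {eα eβ eγ} {H : Finset (Finset (α ⊕ β ⊕ γ))}

lemma HasFirstPartMatching.of_relabel (h : HasFirstPartMatching (relabel eα eβ eγ H)) :
    HasFirstPartMatching H := by
  obtain ⟨N, hNH, hdisj, hcov⟩ := h
  refine ⟨N.map (eα.sumCongr (eβ.sumCongr eγ)).finsetCongr.symm.toEmbedding, ?_, ?_, fun a => ?_⟩
  · intro s hs
    obtain ⟨s', hs', rfl⟩ := mem_map.mp hs
    obtain ⟨t, ht, rfl⟩ := mem_map.mp (hNH hs')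
    simpa only [Equiv.coe_toEmbedding, Equiv.symm_apply_apply] using ht
  · simp only [mem_map]
    rintro _ ⟨s, hs, rfl⟩ _ ⟨t, ht, rfl⟩ hst
    simpa [Equiv.finsetCongr_apply, disjoint_map] using
      hdisj s hs t ht fun h => hst (by rw [h])
  · obtain ⟨s, hs, has⟩ := hcov (eα a)
    exact ⟨_, mem_map_of_mem _ hs, by simpa [Finset.mem_map_equiv] using has⟩

variable [DecidableEq α] [DecidableEq β] [DecidableEq γ] [DecidableEq α'] [DecidableEq β']
  [DecidableEq γ']

lemma IsTripartite.relabel (hH : IsTripartite H) : IsTripartite (relabel eα eβ eγ H) := by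
  intro s hs
  rw [TripartiteHypergraph.relabel, mem_map] at hs
  obtain ⟨s, hs, rfl⟩ := hs
  obtain ⟨a, b, c, rfl⟩ := hH s hs
  exact ⟨eα a, eβ b, eγ c, by simp [triple, Finset.map_insert]⟩

lemma degree_relabel (v : α' ⊕ β' ⊕ γ') :
    degree (relabel eα eβ eγ H) v = degree H ((eα.sumCongr (eβ.sumCongr eγ)).symm v) := by
  simp only [degree, relabel, filter_map, card_map]
  congr 1
  exact filter_congr fun s _ => by simp [Finset.mem_map_equiv]

end Relabel

section ColouredGraph

variable [DecidableEq α] [DecidableEq β] [DecidableEq γ] {E : Type*} [Fintype E]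
  (col : E → α) (ends : E → β × γ)

def ofColouredGraph : Finset (Finset (α ⊕ β ⊕ γ)) :=
  univ.image fun e => triple (col e) (ends e).1 (ends e).2

lemma isTripartite_ofColouredGraph : IsTripartite (ofColouredGraph col ends) := by
  intro s hs
  obtain ⟨e, -, rfl⟩ := mem_image.mp hs
  exact ⟨_, _, _, rfl⟩

variable {col ends}

lemma degree_ofColouredGraph (hends : Injective ends) (v : α ⊕ β ⊕ γ) :
    degree (ofColouredGraph col ends) v = #{e | v ∈ triple (col e) (ends e).1 (ends e).2} := by
  refine (congrArg card filter_image).trans (card_image_of_injective _ fun e e' h => hends ?_)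
  have hb : Sum.inr (Sum.inl (ends e).1) ∈ triple (col e') (ends e').1 (ends e').2 := by
    rw [← h]; simp [triple]
  have hc : Sum.inr (Sum.inr (ends e).2) ∈ triple (col e') (ends e').1 (ends e').2 := by
    rw [← h]; simp [triple]
  simp only [triple, mem_insert, mem_singleton, reduceCtorEq, Sum.inr.injEq, Sum.inl.injEq,
    false_or, or_false] at hb hc
  exact Prod.ext hb hc

lemma HasFirstPartMatching.exists_rainbow (h : HasFirstPartMatching (ofColouredGraph col ends)) :
    ∃ f : α → E, (∀ a, col (f a) = a) ∧
      ∀ a a', a ≠ a' → (ends (f a)).1 ≠ (ends (f a')).1 ∧ (ends (f a)).2 ≠ (ends (f a')).2 := by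
  obtain ⟨N, hNH, hdisj, hcov⟩ := h
  choose s hsN has using hcov
  have hedge a : ∃ e, col e = a ∧ s a = triple (col e) (ends e).1 (ends e).2 := by
    obtain ⟨e, -, he⟩ := mem_image.mp (hNH (hsN a))
    refine ⟨e, ?_, he.symm⟩
    have := has a
    rw [← he] at this
    simpa [triple, eq_comm] using this
  choose f hf hs using hedge
  refine ⟨f, hf, fun a a' hne => ?_⟩
  have hd : Disjoint (s a) (s a') := hdisj _ (hsN a) _ (hsN a') fun h => hne <| Eq.symm <| by
    simpa [← h, hs a, hf, triple] using has a'
  rw [hs a, hs a'] at hd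
  constructor
  · intro h
    exact disjoint_left.mp hd (show Sum.inr (Sum.inl (ends (f a)).1) ∈ _ by simp [triple])
      (by simp [triple, h])
  · intro h
    exact disjoint_left.mp hd (show Sum.inr (Sum.inr (ends (f a)).2) ∈ _ by simp [triple])
      (by simp [triple, h])

end ColouredGraph

lemma card_filter_fst_eq_le_card {E C O : Type*} [Fintype E] [Fintype O] [DecidableEq C]
    [DecidableEq O] {ends : E → (C × O) × (C × O)} (hends : Injective ends)
    (hblock : ∀ e, (ends e).1.1 = (ends e).2.1) (b : C × O) :
    #{e | (ends e).1 = b} ≤ Fintype.card O := by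
  refine card_le_card_of_injOn (fun e => (ends e).2.2) (fun _ _ => mem_univ _) ?_
  intro e he e' he' h
  simp only [coe_filter, mem_univ, true_and, Set.mem_ofPred_eq] at he he'
  exact hends (Prod.ext (he.trans he'.symm) (Prod.ext (by rw [← hblock, ← hblock, he, he']) h))

section DoubleStar

variable (L : Type*)

/-- The `2 |L|` double stars are indexed by `c : Bool × L`; in either side, `(c, none)` is the
centre of star `c` and `(c, some t)` its leaf `t`. Edge `(none, c)` is the blue centre edge of star
`c`, and edge `(some c, (s, t))` is the leaf edge of star `c` at leaf `t` on side `s`, coloured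
`some c`. Indexing both by `Bool × L` makes every colour class have `2 |L|` edges. -/
def doubleStarEnds :
    Option (Bool × L) × (Bool × L) → ((Bool × L) × Option L) × ((Bool × L) × Option L)
  | (none, c) => ((c, none), (c, none))
  | (some c, (true, t)) => ((c, none), (c, some t))
  | (some c, (false, t)) => ((c, some t), (c, none))

lemma doubleStarEnds_injective : Injective (doubleStarEnds L) := by
  rintro ⟨_ | c, s, t⟩ ⟨_ | c', s', t'⟩ h <;> cases s <;> cases s' <;>
    simp_all [doubleStarEnds]

lemma doubleStarEnds_fst_fst_eq_snd_fst (e : Option (Bool × L) × (Bool × L)) :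
    (doubleStarEnds L e).1.1 = (doubleStarEnds L e).2.1 := by
  rcases e with ⟨_ | c, _ | _, t⟩ <;> rfl

variable [Fintype L] [DecidableEq L]

abbrev doubleStarHypergraph :
    Finset (Finset (Option (Bool × L) ⊕ ((Bool × L) × Option L) ⊕ ((Bool × L) × Option L))) :=
  ofColouredGraph Prod.fst (doubleStarEnds L)

lemma degree_inl_doubleStarHypergraph (a : Option (Bool × L)) :
    degree (doubleStarHypergraph L) (Sum.inl a) = 2 * Fintype.card L := by
  rw [degree_ofColouredGraph (doubleStarEnds_injective L)]
  simp only [triple, mem_insert, mem_singleton, Sum.inl.injEq, reduceCtorEq, or_false]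
  have : ({e | a = e.1} : Finset (Option (Bool × L) × (Bool × L))) = {a} ×ˢ univ := by
    ext ⟨a', p⟩
    simp [eq_comm]
  rw [this, card_product, card_singleton, one_mul, card_univ, Fintype.card_prod,
    Fintype.card_bool]

lemma degree_inr_doubleStarHypergraph (w : ((Bool × L) × Option L) ⊕ ((Bool × L) × Option L)) :
    degree (doubleStarHypergraph L) (Sum.inr w) ≤ Fintype.card L + 1 := by
  rw [degree_ofColouredGraph (doubleStarEnds_injective L), ← Fintype.card_option]
  rcases w with b | c
  · simpa [triple, eq_comm] using card_filter_fst_eq_le_card (doubleStarEnds_injective L)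
      (doubleStarEnds_fst_fst_eq_snd_fst L) b
  · simpa [triple, eq_comm] using card_filter_fst_eq_le_card
      (Prod.swap_injective.comp (doubleStarEnds_injective L))
      (fun e => (doubleStarEnds_fst_fst_eq_snd_fst L e).symm) c

lemma not_hasFirstPartMatching_doubleStarHypergraph :
    ¬ HasFirstPartMatching (doubleStarHypergraph L) := by
  intro h
  obtain ⟨f, hcol, hrainbow⟩ := h.exists_rainbow
  set c := (f none).2
  have h0 : f none = (none, c) := Prod.ext (hcol none) rfl
  have h1 : f (some c) = (some c, (f (some c)).2) := Prod.ext (hcol _) rfl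
  obtain ⟨hβ, hγ⟩ := hrainbow none (some c) (Option.some_ne_none c).symm
  rw [h0, h1] at hβ hγ
  generalize (f (some c)).2 = p at hβ hγ
  rcases p with ⟨_ | _, t⟩ <;> simp [doubleStarEnds] at hβ hγ

end DoubleStar

end TripartiteHypergraph

open TripartiteHypergraph in
theorem stmt9_general (m : ℕ) (hm : Even m) :
    ∃ (n1 n2 n3 : ℕ) (H : Finset (Finset (Fin n1 ⊕ Fin n2 ⊕ Fin n3))),
      (∀ s ∈ H, ∃ a b c, s = {Sum.inl a, Sum.inr (Sum.inl b), Sum.inr (Sum.inr c)}) ∧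
      (∀ a : Fin n1, (H.filter (fun s => Sum.inl a ∈ s)).card = m) ∧
      (∀ v : Fin n2 ⊕ Fin n3, (H.filter (fun s => Sum.inr v ∈ s)).card ≤ m / 2 + 1) ∧
      ¬ ∃ N ⊆ H, (∀ s ∈ N, ∀ t ∈ N, s ≠ t → Disjoint s t) ∧
          ∀ a : Fin n1, ∃ s ∈ N, Sum.inl a ∈ s := by
  obtain ⟨k, rfl⟩ := hm
  refine ⟨_, _, _, relabel (Fintype.equivFin _) (Fintype.equivFin _) (Fintype.equivFin _)
    (doubleStarHypergraph (Fin k)), (isTripartite_ofColouredGraph _ _).relabel, fun a => ?_,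
    fun v => ?_, fun hN => not_hasFirstPartMatching_doubleStarHypergraph _ (.of_relabel hN)⟩
  · change degree _ _ = _
    rw [degree_relabel]
    simpa [two_mul] using degree_inl_doubleStarHypergraph (Fin k) _
  · change degree _ _ ≤ _
    rw [degree_relabel, show (k + k) / 2 = k by omega]
    simpa using degree_inr_doubleStarHypergraph (Fin k) _

theorem stmt9 (m : ℕ) (hm : Even m) (h4 : 4 ≤ m) :
    ∃ (n1 n2 n3 : ℕ) (H : Finset (Finset (Fin n1 ⊕ Fin n2 ⊕ Fin n3))),
      (∀ s ∈ H, ∃ a b c, s = {Sum.inl a, Sum.inr (Sum.inl b), Sum.inr (Sum.inr c)}) ∧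
      (∀ a : Fin n1, (H.filter (fun s => Sum.inl a ∈ s)).card = m) ∧
      (∀ v : Fin n2 ⊕ Fin n3, (H.filter (fun s => Sum.inr v ∈ s)).card ≤ m / 2 + 1) ∧
      ¬ ∃ N ⊆ H, (∀ s ∈ N, ∀ t ∈ N, s ≠ t → Disjoint s t) ∧
          ∀ a : Fin n1, ∃ s ∈ N, Sum.inl a ∈ s :=
  stmt9_general m hm
end

section
/- There exists a tripartite 3-uniform hypergraph H with parts V1, V2, V3 in which every vertex of V1 has degree 3, every vertex of V2 ∪ V3 has degree at most 2, and H has no matching covering all of V1. -/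
/-!
Read `(a, (b, c))` as an edge `bc` of colour `a` in a bipartite multigraph; a `V₁`-matching of the
associated tripartite hypergraph is then a rainbow matching. In the witness the colours come in two
blocks, `{0, 1}` and `{2, 3}`. Within a block, two edges of each colour form a 4-cycle with
alternating colours, on which every edge of one colour meets both edges of the other; so a rainbow
matching takes the third, outer edge of one colour of each block. The four outer edges form a
4-cycle on `{4, 5} × {4, 5}` on which every outer edge of the first block meets every outer edge
of the second.
-/

open Finset Function

section

variable {α β γ : Type*} [DecidableEq α] [DecidableEq β] [DecidableEq γ]

def triple (a : α) (e : β × γ) : Finset (α ⊕ β ⊕ γ) :=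
  {.inl a, .inr (.inl e.1), .inr (.inr e.2)}

@[simp]
lemma inl_mem_triple {a a' : α} {e : β × γ} : .inl a' ∈ triple a e ↔ a' = a := by
  simp [triple]

lemma disjoint_triple_iff {a a' : α} {e e' : β × γ} :
    Disjoint (triple a e) (triple a' e') ↔ a ≠ a' ∧ e.1 ≠ e'.1 ∧ e.2 ≠ e'.2 := by
  simp [triple, disjoint_insert_right, eq_comm]

variable [Fintype α]

def colourHypergraph (E : α → Finset (β × γ)) : Finset (Finset (α ⊕ β ⊕ γ)) :=
  (univ.sigma E).image fun x => triple x.1 x.2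

lemma mem_colourHypergraph {E : α → Finset (β × γ)} {s : Finset (α ⊕ β ⊕ γ)} :
    s ∈ colourHypergraph E ↔ ∃ a, ∃ e ∈ E a, triple a e = s := by
  simp [colourHypergraph]

def IsRainbowMatching (E : α → Finset (β × γ)) (f : α → β × γ) : Prop :=
  (∀ a, f a ∈ E a) ∧ Injective (Prod.fst ∘ f) ∧ Injective (Prod.snd ∘ f)

lemma exists_isRainbowMatching {E : α → Finset (β × γ)} {N : Finset (Finset (α ⊕ β ⊕ γ))}
    (hN : N ⊆ colourHypergraph E) (hdisj : ∀ s ∈ N, ∀ t ∈ N, s ≠ t → Disjoint s t)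
    (hcov : ∀ a, ∃ s ∈ N, .inl a ∈ s) : ∃ f, IsRainbowMatching E f := by
  choose s hsN has using hcov
  have hs : ∀ a, ∃ e ∈ E a, s a = triple a e := by
    intro a
    obtain ⟨a', e, he, hs⟩ := mem_colourHypergraph.1 (hN (hsN a))
    obtain rfl : a = a' := by simpa [← hs] using has a
    exact ⟨e, he, hs.symm⟩
  choose f hfE hf using hs
  have hfdisj : ∀ a b, a ≠ b → Disjoint (triple a (f a)) (triple b (f b)) := by
    intro a b hab
    rw [← hf, ← hf]
    refine hdisj _ (hsN a) _ (hsN b) fun h => hab ?_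
    have : .inl a ∈ s b := h ▸ has a
    simpa [hf] using this
  refine ⟨f, hfE, fun a b h => ?_, fun a b h => ?_⟩ <;> by_contra hab
  · exact (disjoint_triple_iff.1 (hfdisj a b hab)).2.1 h
  · exact (disjoint_triple_iff.1 (hfdisj a b hab)).2.2 h

end

def counterexampleColouring : Fin 4 → Finset (Fin 6 × Fin 6) :=
  ![{(0, 0), (1, 1), (4, 4)}, {(1, 0), (0, 1), (5, 5)},
    {(2, 2), (3, 3), (4, 5)}, {(3, 2), (2, 3), (5, 4)}]

lemma counterexampleColouring_outer_left :
    ∀ e ∈ counterexampleColouring 0, ∀ e' ∈ counterexampleColouring 1,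
      e.1 ≠ e'.1 → e.2 ≠ e'.2 → e = (4, 4) ∨ e' = (5, 5) := by
  decide

lemma counterexampleColouring_outer_right :
    ∀ e ∈ counterexampleColouring 2, ∀ e' ∈ counterexampleColouring 3,
      e.1 ≠ e'.1 → e.2 ≠ e'.2 → e = (4, 5) ∨ e' = (5, 4) := by
  decide

lemma not_isRainbowMatching_counterexampleColouring (f : Fin 4 → Fin 6 × Fin 6) :
    ¬ IsRainbowMatching counterexampleColouring f := by
  rintro ⟨hf, hfst, hsnd⟩
  have hleft := counterexampleColouring_outer_left _ (hf 0) _ (hf 1)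
    (hfst.ne (by decide)) (hsnd.ne (by decide))
  have hright := counterexampleColouring_outer_right _ (hf 2) _ (hf 3)
    (hfst.ne (by decide)) (hsnd.ne (by decide))
  rcases hleft with h₀ | h₁ <;> rcases hright with h₂ | h₃
  · exact absurd (@hfst 0 2 (by simp [h₀, h₂])) (by decide)
  · exact absurd (@hsnd 0 3 (by simp [h₀, h₃])) (by decide)
  · exact absurd (@hsnd 1 2 (by simp [h₁, h₂])) (by decide)
  · exact absurd (@hfst 1 3 (by simp [h₁, h₃])) (by decide)

theorem stmt10 :
    ∃ (n1 n2 n3 : ℕ) (H : Finset (Finset (Fin n1 ⊕ Fin n2 ⊕ Fin n3))),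
      (∀ s ∈ H, ∃ a b c, s = {Sum.inl a, Sum.inr (Sum.inl b), Sum.inr (Sum.inr c)}) ∧
      (∀ a : Fin n1, (H.filter (fun s => Sum.inl a ∈ s)).card = 3) ∧
      (∀ v : Fin n2 ⊕ Fin n3, (H.filter (fun s => Sum.inr v ∈ s)).card ≤ 2) ∧
      ¬ ∃ N ⊆ H, (∀ s ∈ N, ∀ t ∈ N, s ≠ t → Disjoint s t) ∧
          ∀ a : Fin n1, ∃ s ∈ N, Sum.inl a ∈ s := by
  refine ⟨4, 6, 6, colourHypergraph counterexampleColouring, ?_, by decide, by decide, ?_⟩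
  · intro s hs
    obtain ⟨a, e, -, rfl⟩ := mem_colourHypergraph.1 hs
    exact ⟨a, e.1, e.2, rfl⟩
  · rintro ⟨N, hN, hdisj, hcov⟩
    obtain ⟨f, hf⟩ := exists_isRainbowMatching hN hdisj hcov
    exact not_isRainbowMatching_counterexampleColouring f hf
end

section
/- For every even m ≥ 2, any matching in the coloured graph G_m that contains one edge of the blue colour class must omit at least one of the non-blue colours; in particular every rainbow matching of G_m has size at most m. -/
theorem Set.InjOn.ncard_lt_natCard_of_forall_ne {α β : Type*} [Finite β] {s : Set α}
    {f : α → β} (hf : s.InjOn f) {b : β} (hb : ∀ x ∈ s, f x ≠ b) : s.ncard < Nat.card β := by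
  rw [← hf.ncard_image, ← Set.ncard_univ]
  refine Set.ncard_lt_ncard (Set.ssubset_univ_iff.2 fun h => ?_)
  obtain ⟨x, hx, hxb⟩ : b ∈ f '' s := h ▸ Set.mem_univ b
  exact hb x hx hxb

section DoubleStars

variable {m : ℕ}

theorem centre_mem_of_colm_eq_none {e : Sym2 (DSV m)} (he : e ∈ (Gm m).edgeSet)
    (hc : colm m e = none) : ∃ i, ∀ j : Fin 2, (i, Sum.inl j) ∈ e := by
  induction e using Sym2.ind with | _ a b =>
  obtain ⟨i, x | x⟩ := a <;> obtain ⟨i', y | y⟩ := b <;> simp [colm] at hc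
  obtain ⟨hxy, rfl⟩ : x ≠ y ∧ i = i' := by simp [Gm] at he; grind
  refine ⟨i, fun j => ?_⟩
  obtain rfl | rfl : j = x ∨ j = y := by omega
  all_goals simp

theorem centre_mem_of_colm_eq_some {e : Sym2 (DSV m)} (he : e ∈ (Gm m).edgeSet) {i : Fin m}
    (hc : colm m e = some i) : ∃ j : Fin 2, (i, Sum.inl j) ∈ e := by
  induction e using Sym2.ind with | _ a b =>
  obtain ⟨i, x | x⟩ := a <;> obtain ⟨i', y | y⟩ := b <;> simp [colm, Gm] at hc he
  · obtain ⟨rfl, -⟩ := he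
    exact ⟨x, by simp [← hc]⟩
  · obtain ⟨rfl, -⟩ := he
    exact ⟨y, by simp [← hc]⟩

variable {M : Set (Sym2 (DSV m))}

theorem IsMatching.exists_forall_colm_ne_some_of_colm_eq_none (hM : IsMatching (Gm m) M)
    {e : Sym2 (DSV m)} (he : e ∈ M) (hblue : colm m e = none) :
    ∃ i : Fin m, ∀ f ∈ M, colm m f ≠ some i := by
  obtain ⟨i, hcentres⟩ := centre_mem_of_colm_eq_none (hM.1 he) hblue
  refine ⟨i, fun f hf hfi => ?_⟩
  obtain ⟨j, hj⟩ := centre_mem_of_colm_eq_some (hM.1 hf) hfi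
  rw [hM.eq_of_mem_of_mem he hf (hcentres j) hj, hfi] at hblue
  exact Option.some_ne_none i hblue

theorem IsMatching.exists_forall_colm_ne (hM : IsMatching (Gm m) M) :
    ∃ c : Option (Fin m), ∀ e ∈ M, colm m e ≠ c := by
  by_cases hblue : ∃ e ∈ M, colm m e = none
  · obtain ⟨e, he, hblue⟩ := hblue
    obtain ⟨i, hi⟩ := hM.exists_forall_colm_ne_some_of_colm_eq_none he hblue
    exact ⟨some i, hi⟩
  · push Not at hblue
    exact ⟨none, hblue⟩

end DoubleStars

theorem stmt14_general (m : ℕ) (M : Set (Sym2 (DSV m)))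
    (hM : IsMatching (Gm m) M) :
    ((∃ e ∈ M, colm m e = none) → ∃ i : Fin m, ∀ e ∈ M, colm m e ≠ some i) ∧
    ((∀ e ∈ M, ∀ f ∈ M, e ≠ f → colm m e ≠ colm m f) → M.ncard ≤ m) := by
  refine ⟨fun ⟨e, he, hblue⟩ => hM.exists_forall_colm_ne_some_of_colm_eq_none he hblue,
    fun hrainbow => ?_⟩
  have hinj : M.InjOn (colm m) := fun e he f hf hef => by
    by_contra hne
    exact hrainbow e he f hf hne hef
  obtain ⟨c, hc⟩ := hM.exists_forall_colm_ne
  simpa [Nat.lt_succ_iff] using hinj.ncard_lt_natCard_of_forall_ne hc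

theorem stmt14 (m : ℕ) (hm : Even m) (h2 : 2 ≤ m) (M : Set (Sym2 (DSV m)))
    (hM : IsMatching (Gm m) M) :
    ((∃ e ∈ M, colm m e = none) → ∃ i : Fin m, ∀ e ∈ M, colm m e ≠ some i) ∧
    ((∀ e ∈ M, ∀ f ∈ M, e ≠ f → colm m e ≠ colm m f) → M.ncard ≤ m) :=
  stmt14_general m M hM
end
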